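/- arXiv:0705.1095 — 3 statements merged into one kernel-verified Lean document; each statement's English description precedes it below -/
import Mathlib

section
/- Let K be a convex body in ℝⁿ and let E(θ) = c + (cos θ)·u + (sin θ)·v be an ellipse inscribed in K (u, v linearly independent). Then E is NOT a-maximal for K if and only if there exist a unit vector v₀ ∈ ℝⁿ and δ > 0 such that E(θ) + s·v₀ ∈ int K for all θ ∈ ℝ and all s with 0 < s < δ. -/
/-- A convex body in ℝⁿ: a compact convex set with nonempty interior. -/
def IsConvexBody {n : ℕ} (K : Set (EuclideanSpace ℝ (Fin n))) : Prop :=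
  IsCompact K ∧ Convex ℝ K ∧ (interior K).Nonempty

/-- The parametrized ellipse `θ ↦ c + (cos θ)•u + (sin θ)•v` is inscribed in `K`. -/
def EllipseInscribed {n : ℕ} (K : Set (EuclideanSpace ℝ (Fin n)))
    (c u v : EuclideanSpace ℝ (Fin n)) : Prop :=
  ∀ θ : ℝ, c + (Real.cos θ) • u + (Real.sin θ) • v ∈ K

/-- The inscribed ellipse `θ ↦ c + (cos θ)•u + (sin θ)•v` is `a`-maximal for `K`:
no dilated copy (ratio `ρ > 1`, same orientation and eccentricity) is inscribed in `K`. -/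
def AMaximal {n : ℕ} (K : Set (EuclideanSpace ℝ (Fin n)))
    (c u v : EuclideanSpace ℝ (Fin n)) : Prop :=
  ¬ ∃ (ρ : ℝ) (c' : EuclideanSpace ℝ (Fin n)), 1 < ρ ∧
      ∀ θ : ℝ, c' + ρ • ((Real.cos θ) • u + (Real.sin θ) • v) ∈ K

/-!
If a dilate `c' + ρ • E₀` (`ρ > 1`) of the centred ellipse `E₀` lies in `K`, shrinking it by the
factor `ρ⁻¹` towards any interior point of `K` gives a translate of `E` lying in `int K`. These
translates have more than one centre, so one of them, `E + w`, differs from `E`, and by convexity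
every `E + t • w` with `0 < t ≤ 1` lies in `int K`. Conversely, a translate of `E` inside the open
set `int K` is compact, so it stays inside `int K` under a slight dilation about its centre.
-/

open Real Set Filter Topology

section

variable {E : Type*} [AddCommGroup E] [Module ℝ E] [TopologicalSpace E] [ContinuousAdd E]
  [ContinuousSMul ℝ E]

theorem exists_one_lt_forall_add_smul_mem {S U : Set E} (hS : IsCompact S) (hU : IsOpen U)
    {c : E} (hSU : ∀ y ∈ S, c + y ∈ U) : ∃ ρ : ℝ, 1 < ρ ∧ ∀ y ∈ S, c + ρ • y ∈ U := by
  have hnear : ∀ᶠ ρ in 𝓝 (1 : ℝ), ∀ y ∈ S, c + ρ • y ∈ U := by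
    refine hS.eventually_forall_of_forall_eventually fun y hy => ?_
    have hcont : Continuous fun z : ℝ × E => c + z.1 • z.2 := by fun_prop
    exact hcont.continuousAt.preimage_mem_nhds (hU.mem_nhds (by simpa using hSU y hy))
  obtain ⟨ρ, hρU, hρ⟩ :=
    ((hnear.filter_mono (nhdsWithin_le_nhds (s := Ioi 1))).and self_mem_nhdsWithin).exists
  exact ⟨ρ, hρ, hρU⟩

end

theorem isCompact_range_cos_smul_add_sin_smul {E : Type*} [NormedAddCommGroup E] [NormedSpace ℝ E]
    (u v : E) : IsCompact (range fun θ : ℝ => cos θ • u + sin θ • v) := by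
  refine Function.Periodic.compact_of_continuous (c := 2 * π) (fun θ => ?_) two_pi_pos.ne'
    (by fun_prop)
  simp only [cos_add_two_pi, sin_add_two_pi]

section

variable {E : Type*} [AddCommGroup E] [Module ℝ E] [TopologicalSpace E] [IsTopologicalAddGroup E]
  [ContinuousConstSMul ℝ E]

theorem Convex.add_mem_interior_of_add_smul_mem {K : Set E} (hK : Convex ℝ K) {ρ : ℝ} (hρ : 1 < ρ)
    {c x y : E} (hx : x ∈ interior K) (hy : c + ρ • y ∈ K) :
    ρ⁻¹ • c + (1 - ρ⁻¹) • x + y ∈ interior K := by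
  have hρ₀ : 0 < ρ⁻¹ := inv_pos.2 (one_pos.trans hρ)
  convert hK.combo_interior_self_mem_interior hx hy (sub_pos.2 (inv_lt_one_of_one_lt₀ hρ))
    hρ₀.le (sub_add_cancel 1 _) using 1
  rw [smul_add, smul_smul, inv_mul_cancel₀ (inv_pos.1 hρ₀).ne', one_smul]
  abel

end

theorem Convex.exists_forall_add_smul_mem_interior_of_forall_add_smul_mem {E : Type*}
    [NormedAddCommGroup E] [NormedSpace ℝ E] [Nontrivial E] {K S : Set E} (hK : Convex ℝ K)
    (hKi : (interior K).Nonempty) {c c' : E} (hS : ∀ y ∈ S, c + y ∈ K) {ρ : ℝ} (hρ : 1 < ρ)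
    (hρS : ∀ y ∈ S, c' + ρ • y ∈ K) :
    ∃ v₀ : E, ‖v₀‖ = 1 ∧ ∃ δ : ℝ, 0 < δ ∧
      ∀ y ∈ S, ∀ s : ℝ, 0 < s → s < δ → c + y + s • v₀ ∈ interior K := by
  set center : E → E := fun x => ρ⁻¹ • c' + (1 - ρ⁻¹) • x
  have hinj : Function.Injective center := fun x₁ x₂ h =>
    smul_right_injective E (sub_pos.2 (inv_lt_one_of_one_lt₀ hρ)).ne' (add_left_cancel h)
  obtain ⟨x₀, hx₀⟩ := hKi
  obtain ⟨_, ⟨x, hx, rfl⟩, hne⟩ :=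
    ((infinite_of_mem_nhds x₀ (isOpen_interior.mem_nhds hx₀)).nontrivial.image hinj).exists_ne c
  set w := center x - c
  have hw₀ : w ≠ 0 := sub_ne_zero.2 hne
  have hw : 0 < ‖w‖ := norm_pos_iff.2 hw₀
  refine ⟨‖w‖⁻¹ • w, norm_smul_inv_norm hw₀, ‖w‖, hw, fun y hy s hs hsδ => ?_⟩
  convert hK.add_smul_sub_mem_interior (hS y hy) (hK.add_mem_interior_of_add_smul_mem hρ hx
    (hρS y hy)) ⟨div_pos hs hw, (div_le_one hw).2 hsδ.le⟩ using 1
  simp only [w]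
  module

theorem stmt_2_general {n : ℕ} (hn : 1 ≤ n) (K : Set (EuclideanSpace ℝ (Fin n)))
    (hK : IsConvexBody K) (c u v : EuclideanSpace ℝ (Fin n))
    (hins : EllipseInscribed K c u v) :
    ¬ AMaximal K c u v ↔
      ∃ v₀ : EuclideanSpace ℝ (Fin n), ‖v₀‖ = 1 ∧ ∃ δ : ℝ, 0 < δ ∧
        ∀ θ s : ℝ, 0 < s → s < δ →
          c + (Real.cos θ) • u + (Real.sin θ) • v + s • v₀ ∈ interior K := by
  obtain ⟨-, hconv, hint⟩ := hK
  have : Nonempty (Fin n) := ⟨⟨0, hn⟩⟩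
  have hS : ∀ y ∈ range fun θ : ℝ => cos θ • u + sin θ • v, c + y ∈ K :=
    forall_mem_range.2 fun θ => add_assoc c _ _ ▸ hins θ
  rw [AMaximal, not_not]
  constructor
  · rintro ⟨ρ, c', hρ, hρK⟩
    obtain ⟨v₀, hv₀, δ, hδ, h⟩ :=
      hconv.exists_forall_add_smul_mem_interior_of_forall_add_smul_mem hint hS hρ
        (forall_mem_range.2 hρK)
    exact ⟨v₀, hv₀, δ, hδ, fun θ => add_assoc c _ _ ▸ h _ (mem_range_self θ)⟩
  · rintro ⟨v₀, -, δ, hδ, h⟩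
    have hshift : ∀ θ : ℝ, c + (δ / 2) • v₀ + (cos θ • u + sin θ • v) ∈ interior K := fun θ => by
      simpa only [add_right_comm, add_assoc] using h θ (δ / 2) (half_pos hδ) (half_lt_self hδ)
    obtain ⟨ρ, hρ, hρK⟩ := exists_one_lt_forall_add_smul_mem
      (isCompact_range_cos_smul_add_sin_smul u v) isOpen_interior (forall_mem_range.2 hshift)
    exact ⟨ρ, _, hρ, fun θ => interior_subset (hρK _ (mem_range_self θ))⟩

/-- An inscribed ellipse fails to be a-maximal iff all small translates in some unit
direction lie entirely in the interior of K. -/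
theorem stmt_2 {n : ℕ} (hn : 1 ≤ n) (K : Set (EuclideanSpace ℝ (Fin n)))
    (hK : IsConvexBody K) (c u v : EuclideanSpace ℝ (Fin n))
    (huv : LinearIndependent ℝ ![u, v]) (hins : EllipseInscribed K c u v) :
    ¬ AMaximal K c u v ↔
      ∃ v₀ : EuclideanSpace ℝ (Fin n), ‖v₀‖ = 1 ∧ ∃ δ : ℝ, 0 < δ ∧
        ∀ θ s : ℝ, 0 < s → s < δ →
          c + (Real.cos θ) • u + (Real.sin θ) • v + s • v₀ ∈ interior K :=
  stmt_2_general hn K hK c u v hins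
end

section
/- Let K be a convex body in ℝⁿ, x ∈ int K, and y₁, y₂ ∈ ℝⁿ \ {0} with y₁ + y₂ ≠ 0. Then b*_K(x, y₁ + y₂) ≥ b*_K(x,y₁)·b*_K(x,y₂)/(b*_K(x,y₁) + b*_K(x,y₂)); equivalently, 1/b*_K(x, y₁ + y₂) ≤ 1/b*_K(x, y₁) + 1/b*_K(x, y₂). In particular, for each fixed x ∈ int K the function y ↦ 1/b*_K(x,y) (extended by the value 0 at y = 0) is a norm on ℝⁿ. -/
/-- The ellipse with parameters `(a, b)` through `x` in direction `y`,
`θ ↦ (cos θ)•a + b(sin θ)•y + (x - a)`, is inscribed in `K`. -/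
def InscribedEllipse {n : ℕ} (K : Set (EuclideanSpace ℝ (Fin n)))
    (x y a : EuclideanSpace ℝ (Fin n)) (b : ℝ) : Prop :=
  ∀ θ : ℝ, (Real.cos θ) • a + (b * Real.sin θ) • y + (x - a) ∈ K

/-- `b*_K(x,y)`: the supremum of `b > 0` such that some ellipse with parameters
`(a,b)` through `x` in direction `y` is inscribed in `K`. -/
noncomputable def bStar {n : ℕ} (K : Set (EuclideanSpace ℝ (Fin n)))
    (x y : EuclideanSpace ℝ (Fin n)) : ℝ :=
  sSup { b : ℝ | 0 < b ∧ ∃ a, InscribedEllipse K x y a b }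

section aux
variable {n : ℕ} {K : Set (EuclideanSpace ℝ (Fin n))} {x : EuclideanSpace ℝ (Fin n)}

lemma sSet_nonempty (hx : x ∈ interior K) (y : EuclideanSpace ℝ (Fin n)) :
    Set.Nonempty { b : ℝ | 0 < b ∧ ∃ a, InscribedEllipse K x y a b } := by
  obtain ⟨ε, hε, hball⟩ := Metric.isOpen_iff.mp isOpen_interior x hx
  refine ⟨ε / (2 * (‖y‖ + 1)), ⟨by positivity, 0, fun θ => ?_⟩⟩
  apply interior_subset (hball ?_)
  rw [Metric.mem_ball, dist_eq_norm]
  have h1 : (Real.cos θ) • (0 : EuclideanSpace ℝ (Fin n)) +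
      (ε / (2 * (‖y‖ + 1)) * Real.sin θ) • y + (x - 0) - x
      = (ε / (2 * (‖y‖ + 1)) * Real.sin θ) • y := by
    simp [smul_zero]
  rw [h1, norm_smul]
  have hs : |Real.sin θ| ≤ 1 := abs_le.mpr ⟨Real.neg_one_le_sin θ, Real.sin_le_one θ⟩
  have hy0 : (0:ℝ) ≤ ‖y‖ := norm_nonneg y
  have : ‖ε / (2 * (‖y‖ + 1)) * Real.sin θ‖ ≤ ε / (2 * (‖y‖ + 1)) := by
    rw [Real.norm_eq_abs, abs_mul, abs_of_pos (by positivity : (0:ℝ) < ε / (2 * (‖y‖ + 1)))]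
    exact mul_le_of_le_one_right (by positivity) hs
  calc ‖ε / (2 * (‖y‖ + 1)) * Real.sin θ‖ * ‖y‖ ≤ ε / (2 * (‖y‖ + 1)) * ‖y‖ := by
        exact mul_le_mul_of_nonneg_right this hy0
    _ < ε := by
        rw [div_mul_eq_mul_div, div_lt_iff₀ (by positivity)]
        nlinarith

lemma sSet_bddAbove (hK : IsConvexBody K) {y : EuclideanSpace ℝ (Fin n)} (hy : y ≠ 0) :
    BddAbove { b : ℝ | 0 < b ∧ ∃ a, InscribedEllipse K x y a b } := by
  obtain ⟨R, hR⟩ := hK.1.isBounded.exists_norm_le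
  refine ⟨R / ‖y‖, fun b hb => ?_⟩
  obtain ⟨hbpos, a, ha⟩ := hb
  have h1 := ha (Real.pi / 2)
  have h2 := ha (-(Real.pi / 2))
  simp only [Real.cos_pi_div_two, Real.sin_pi_div_two, Real.cos_neg, Real.sin_neg,
    mul_one, zero_smul, zero_add, mul_neg] at h1 h2
  have hd : ‖(b • y + (x - a)) - ((-b) • y + (x - a))‖ ≤ R + R := by
    calc ‖(b • y + (x - a)) - ((-b) • y + (x - a))‖
        ≤ ‖b • y + (x - a)‖ + ‖(-b) • y + (x - a)‖ := norm_sub_le _ _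
      _ ≤ R + R := add_le_add (hR _ h1) (hR _ (by simpa [neg_smul] using h2))
  have he : (b • y + (x - a)) - ((-b) • y + (x - a)) = (2 * b) • y := by
    rw [neg_smul]; module
  rw [he, norm_smul, Real.norm_eq_abs, abs_of_pos (by positivity)] at hd
  have hyn : (0:ℝ) < ‖y‖ := norm_pos_iff.mpr hy
  rw [le_div_iff₀ hyn]
  nlinarith

lemma bStar_pos (hK : IsConvexBody K) (hx : x ∈ interior K)
    {y : EuclideanSpace ℝ (Fin n)} (hy : y ≠ 0) : 0 < bStar K x y := by
  obtain ⟨b, hb⟩ := sSet_nonempty hx y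
  exact lt_of_lt_of_le hb.1 (le_csSup (sSet_bddAbove hK hy) hb)

lemma combine (hK : IsConvexBody K) {y₁ y₂ : EuclideanSpace ℝ (Fin n)} {b₁ b₂ : ℝ}
    (h1 : b₁ ∈ { b : ℝ | 0 < b ∧ ∃ a, InscribedEllipse K x y₁ a b })
    (h2 : b₂ ∈ { b : ℝ | 0 < b ∧ ∃ a, InscribedEllipse K x y₂ a b }) :
    b₁ * b₂ / (b₁ + b₂) ∈ { b : ℝ | 0 < b ∧ ∃ a, InscribedEllipse K x (y₁ + y₂) a b } := by
  obtain ⟨hb₁, a₁, ha₁⟩ := h1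
  obtain ⟨hb₂, a₂, ha₂⟩ := h2
  have hsum : 0 < b₁ + b₂ := by linarith
  refine ⟨by positivity, (b₂ / (b₁ + b₂)) • a₁ + (b₁ / (b₁ + b₂)) • a₂, fun θ => ?_⟩
  have hmem := hK.2.1 (ha₁ θ) (ha₂ θ) (by positivity : (0:ℝ) ≤ b₂ / (b₁ + b₂))
    (by positivity : (0:ℝ) ≤ b₁ / (b₁ + b₂)) (by field_simp; ring)
  have heq : (Real.cos θ) • ((b₂ / (b₁ + b₂)) • a₁ + (b₁ / (b₁ + b₂)) • a₂) +
      (b₁ * b₂ / (b₁ + b₂) * Real.sin θ) • (y₁ + y₂) +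
      (x - ((b₂ / (b₁ + b₂)) • a₁ + (b₁ / (b₁ + b₂)) • a₂)) =
      (b₂ / (b₁ + b₂)) • ((Real.cos θ) • a₁ + (b₁ * Real.sin θ) • y₁ + (x - a₁)) +
      (b₁ / (b₁ + b₂)) • ((Real.cos θ) • a₂ + (b₂ * Real.sin θ) • y₂ + (x - a₂)) := by
    have h0 : b₁ + b₂ ≠ 0 := ne_of_gt hsum
    match_scalars <;> field_simp <;> ring
  rw [heq]
  exact hmem

end aux

section aux2
variable {n : ℕ} {K : Set (EuclideanSpace ℝ (Fin n))} {x : EuclideanSpace ℝ (Fin n)}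

lemma bStar_key (hK : IsConvexBody K) (hx : x ∈ interior K)
    {y₁ y₂ : EuclideanSpace ℝ (Fin n)} (h1 : y₁ ≠ 0) (h2 : y₂ ≠ 0) (h12 : y₁ + y₂ ≠ 0) :
    bStar K x y₁ * bStar K x y₂ / (bStar K x y₁ + bStar K x y₂) ≤ bStar K x (y₁ + y₂) := by
  have hB₁ : 0 < bStar K x y₁ := bStar_pos hK hx h1
  have hB₂ : 0 < bStar K x y₂ := bStar_pos hK hx h2
  have hB₃ : 0 < bStar K x (y₁ + y₂) := bStar_pos hK hx h12
  set B₁ := bStar K x y₁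
  set B₂ := bStar K x y₂
  set B₃ := bStar K x (y₁ + y₂)
  by_contra hcon
  push_neg at hcon
  -- 1/B₁ + 1/B₂ < 1/B₃
  have hq : 0 < B₁ * B₂ / (B₁ + B₂) := by positivity
  have hlt : 1 / B₁ + 1 / B₂ < 1 / B₃ := by
    have := one_div_lt_one_div_of_lt hB₃ hcon
    calc 1 / B₁ + 1 / B₂ = 1 / (B₁ * B₂ / (B₁ + B₂)) := by
          field_simp; ring
      _ < 1 / B₃ := this
  set u : ℝ := 1 / B₃ - (1 / B₁ + 1 / B₂) with hu
  have hupos : 0 < u := by simp only [hu]; linarith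
  -- pick b₁
  have ht₁ : (1:ℝ) / (1 / B₁ + u / 2) < B₁ := by
    rw [div_lt_iff₀ (by positivity)]
    have : 1 / B₁ * B₁ = 1 := by field_simp
    nlinarith
  obtain ⟨b₁, hb₁mem, hb₁⟩ := exists_lt_of_lt_csSup (sSet_nonempty hx y₁) ht₁
  have hb₁pos : 0 < b₁ := hb₁mem.1
  have hib₁ : 1 / b₁ < 1 / B₁ + u / 2 := by
    have h := one_div_lt_one_div_of_lt (by positivity : (0:ℝ) < 1 / (1 / B₁ + u / 2)) hb₁
    rwa [one_div_one_div] at h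
  have ht₂ : (1:ℝ) / (1 / B₂ + u / 2) < B₂ := by
    rw [div_lt_iff₀ (by positivity)]
    have : 1 / B₂ * B₂ = 1 := by field_simp
    nlinarith
  obtain ⟨b₂, hb₂mem, hb₂⟩ := exists_lt_of_lt_csSup (sSet_nonempty hx y₂) ht₂
  have hb₂pos : 0 < b₂ := hb₂mem.1
  have hib₂ : 1 / b₂ < 1 / B₂ + u / 2 := by
    have h := one_div_lt_one_div_of_lt (by positivity : (0:ℝ) < 1 / (1 / B₂ + u / 2)) hb₂
    rwa [one_div_one_div] at h
  have hf := combine hK hb₁mem hb₂mem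
  have hfle : b₁ * b₂ / (b₁ + b₂) ≤ B₃ := le_csSup (sSet_bddAbove hK h12) hf
  have hfinv : 1 / (b₁ * b₂ / (b₁ + b₂)) = 1 / b₁ + 1 / b₂ := by field_simp; ring
  have hfpos : 0 < b₁ * b₂ / (b₁ + b₂) := hf.1
  have : 1 / B₃ ≤ 1 / (b₁ * b₂ / (b₁ + b₂)) := one_div_le_one_div_of_le hfpos hfle
  rw [hfinv] at this
  have : 1 / B₃ < 1 / B₃ := by
    calc 1 / B₃ ≤ 1 / b₁ + 1 / b₂ := this
      _ < 1 / B₁ + u / 2 + (1 / B₂ + u / 2) := by linarith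
      _ = 1 / B₃ := by simp only [hu]; ring
  exact lt_irrefl _ this

lemma inscribed_smul {y a : EuclideanSpace ℝ (Fin n)} {b c : ℝ} (hc : c ≠ 0) (hb : 0 < b)
    (ha : InscribedEllipse K x y a b) : InscribedEllipse K x (c • y) a (b / |c|) := by
  intro θ
  rcases hc.lt_or_gt with h | h
  · have hcoef : (b / |c| * Real.sin θ) • (c • y) = (b * Real.sin (-θ)) • y := by
      rw [smul_smul, Real.sin_neg, abs_of_neg h]
      congr 1
      have hcc : b / c * c = b := div_mul_cancel₀ b hc
      linear_combination (-(Real.sin θ)) * hcc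
    have hcos : Real.cos θ = Real.cos (-θ) := (Real.cos_neg θ).symm
    rw [hcoef, hcos]
    exact ha (-θ)
  · have hcoef : (b / |c| * Real.sin θ) • (c • y) = (b * Real.sin θ) • y := by
      rw [smul_smul, abs_of_pos h]
      congr 1
      field_simp
    rw [hcoef]
    exact ha θ

lemma bStar_scale_le (hK : IsConvexBody K) (hx : x ∈ interior K)
    {y : EuclideanSpace ℝ (Fin n)} (hy : y ≠ 0) {c : ℝ} (hc : c ≠ 0) :
    bStar K x y ≤ |c| * bStar K x (c • y) := by
  have hcy : c • y ≠ 0 := smul_ne_zero hc hy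
  apply csSup_le (sSet_nonempty hx y)
  intro b hb
  obtain ⟨hbpos, a, ha⟩ := hb
  have hmem : b / |c| ∈ { b : ℝ | 0 < b ∧ ∃ a, InscribedEllipse K x (c • y) a b } :=
    ⟨by positivity, a, inscribed_smul hc hbpos ha⟩
  have := le_csSup (sSet_bddAbove hK hcy) hmem
  have hcpos : 0 < |c| := abs_pos.mpr hc
  calc b = |c| * (b / |c|) := by field_simp
    _ ≤ |c| * bStar K x (c • y) := mul_le_mul_of_nonneg_left this hcpos.le

lemma bStar_smul (hK : IsConvexBody K) (hx : x ∈ interior K)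
    {y : EuclideanSpace ℝ (Fin n)} (hy : y ≠ 0) {c : ℝ} (hc : c ≠ 0) :
    bStar K x (c • y) = bStar K x y / |c| := by
  have hcy : c • y ≠ 0 := smul_ne_zero hc hy
  have h1 := bStar_scale_le hK hx hy hc
  have h2 := bStar_scale_le hK hx hcy (inv_ne_zero hc)
  rw [inv_smul_smul₀ hc, abs_inv] at h2
  have hcpos : 0 < |c| := abs_pos.mpr hc
  have hipos : 0 < |c|⁻¹ := by positivity
  rw [eq_div_iff (ne_of_gt hcpos), mul_comm]
  have hinv : |c| * |c|⁻¹ = 1 := mul_inv_cancel₀ (ne_of_gt hcpos)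
  have h2' : |c| * bStar K x (c • y) ≤ bStar K x y := by
    have h3 := mul_le_mul_of_nonneg_left h2 hcpos.le
    rwa [← mul_assoc, hinv, one_mul] at h3
  linarith [h1, h2']

end aux2

/-- Subadditivity of 1/b*_K(x,·); in particular y ↦ 1/b*_K(x,y) (extended by 0 at 0) is a
norm on ℝⁿ, i.e. a seminorm vanishing only at 0. -/
theorem stmt_8 {n : ℕ} (hn : 1 ≤ n) (K : Set (EuclideanSpace ℝ (Fin n)))
    (hK : IsConvexBody K) (x : EuclideanSpace ℝ (Fin n)) (hx : x ∈ interior K) :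
    (∀ y₁ y₂ : EuclideanSpace ℝ (Fin n), y₁ ≠ 0 → y₂ ≠ 0 → y₁ + y₂ ≠ 0 →
      bStar K x (y₁ + y₂) ≥
        bStar K x y₁ * bStar K x y₂ / (bStar K x y₁ + bStar K x y₂) ∧
      1 / bStar K x (y₁ + y₂) ≤ 1 / bStar K x y₁ + 1 / bStar K x y₂) ∧
    ∃ N : Seminorm ℝ (EuclideanSpace ℝ (Fin n)),
      (∀ y : EuclideanSpace ℝ (Fin n), y ≠ 0 → N y = 1 / bStar K x y) ∧
      ∀ y : EuclideanSpace ℝ (Fin n), N y = 0 → y = 0 := by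
  classical
  have key2 : ∀ y₁ y₂ : EuclideanSpace ℝ (Fin n), y₁ ≠ 0 → y₂ ≠ 0 → y₁ + y₂ ≠ 0 →
      1 / bStar K x (y₁ + y₂) ≤ 1 / bStar K x y₁ + 1 / bStar K x y₂ := by
    intro y₁ y₂ h1 h2 h12
    have hB₁ := bStar_pos hK hx h1
    have hB₂ := bStar_pos hK hx h2
    have hB₃ := bStar_pos hK hx h12
    have hkey := bStar_key hK hx h1 h2 h12
    have hq : (0:ℝ) < bStar K x y₁ * bStar K x y₂ / (bStar K x y₁ + bStar K x y₂) :=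
      div_pos (mul_pos hB₁ hB₂) (by linarith)
    calc 1 / bStar K x (y₁ + y₂)
        ≤ 1 / (bStar K x y₁ * bStar K x y₂ / (bStar K x y₁ + bStar K x y₂)) :=
          one_div_le_one_div_of_le hq hkey
      _ = 1 / bStar K x y₁ + 1 / bStar K x y₂ := by
          have hn1 : bStar K x y₁ ≠ 0 := ne_of_gt hB₁
          have hn2 : bStar K x y₂ ≠ 0 := ne_of_gt hB₂
          have hn3 : bStar K x y₁ + bStar K x y₂ ≠ 0 := by positivity
          field_simp
          ring
  set F : EuclideanSpace ℝ (Fin n) → ℝ := fun y => if y = 0 then 0 else 1 / bStar K x y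
    with hF
  have hFnonneg : ∀ y, 0 ≤ F y := by
    intro y
    by_cases hy : y = 0
    · simp [hF, hy]
    · simp only [hF, if_neg hy]
      exact le_of_lt (one_div_pos.mpr (bStar_pos hK hx hy))
  have hFadd : ∀ y₁ y₂, F (y₁ + y₂) ≤ F y₁ + F y₂ := by
    intro y₁ y₂
    by_cases h1 : y₁ = 0
    · simp [hF, h1]
    by_cases h2 : y₂ = 0
    · simp [hF, h2]
    by_cases h12 : y₁ + y₂ = 0
    · rw [h12]
      simp only [hF, if_pos rfl]
      exact add_nonneg (hFnonneg y₁) (hFnonneg y₂)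
    · simp only [hF, if_neg h1, if_neg h2, if_neg h12]
      exact key2 y₁ y₂ h1 h2 h12
  have hFsmul : ∀ (c : ℝ) (y : EuclideanSpace ℝ (Fin n)), F (c • y) = ‖c‖ * F y := by
    intro c y
    by_cases hc : c = 0
    · simp [hF, hc]
    by_cases hy : y = 0
    · simp [hF, hy]
    · have hcy : c • y ≠ 0 := smul_ne_zero hc hy
      simp only [hF, if_neg hy, if_neg hcy]
      rw [bStar_smul hK hx hy hc, Real.norm_eq_abs, one_div_div, mul_one_div]
  refine ⟨fun y₁ y₂ h1 h2 h12 => ⟨bStar_key hK hx h1 h2 h12, key2 y₁ y₂ h1 h2 h12⟩, ?_⟩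
  refine ⟨Seminorm.of F hFadd hFsmul, fun y hy => ?_, fun y hNy => ?_⟩
  · show F y = _
    simp [hF, if_neg hy]
  · by_contra hy
    have hFy : F y = 0 := hNy
    simp only [hF, if_neg hy] at hFy
    exact absurd hFy (ne_of_gt (one_div_pos.mpr (bStar_pos hK hx hy)))
end

section
/- Let K be a symmetric convex body in ℝⁿ (K = −K), let x ∈ int K, and y ∈ ℝⁿ \ {0}. Then the supremum sup{ |⟨y,w⟩| / √(1 − ⟨x,w⟩²) : w ∈ K* } is attained: there exists w ∈ K* with ⟨x,w⟩² < 1 and |⟨y,w⟩| / √(1 − ⟨x,w⟩²) = 1/b*_K(x,y). -/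
/-- The polar `K* = { w : ⟨z, w⟩ ≤ 1 for all z ∈ K }`. -/
def polarSet {n : ℕ} (K : Set (EuclideanSpace ℝ (Fin n))) : Set (EuclideanSpace ℝ (Fin n)) :=
  { w | ∀ z ∈ K, (inner ℝ z w : ℝ) ≤ 1 }

open Real Set Metric
open scoped RealInnerProductSpace Topology

lemma mul_cos_add_mul_sin_le_one {s c : ℝ} (h : c ^ 2 + s ^ 2 ≤ 1) (θ : ℝ) :
    s * cos θ + c * sin θ ≤ 1 := by
  nlinarith [sin_sq_add_cos_sq θ, sq_nonneg (s * sin θ - c * cos θ)]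

lemma sq_add_sq_le_one_of_forall_abs_le_one {s t c : ℝ} (hs : |s| ≤ 1)
    (h : ∀ θ, |t * cos θ + c * sin θ + (s - t)| ≤ 1) : c ^ 2 + s ^ 2 ≤ 1 := by
  set z : ℂ := ⟨t, c⟩
  have hphase : ∀ θ, t * cos θ + c * sin θ = ‖z‖ * cos (θ - Complex.arg z) := by
    intro θ
    have hre := Complex.norm_mul_cos_arg z
    have him := Complex.norm_mul_sin_arg z
    rw [cos_sub]
    linear_combination (-cos θ) * hre - sin θ * him
  have hr : ‖z‖ ^ 2 = t ^ 2 + c ^ 2 := by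
    rw [Complex.sq_norm, Complex.normSq_mk]; ring
  -- At the phases where `t cos θ + c sin θ` is extremal, `h` gives `|s - t| + √(t² + c²) ≤ 1`.
  have hmax := h (Complex.arg z)
  have hmin := h (Complex.arg z + π)
  rw [hphase, sub_self, cos_zero] at hmax
  rw [hphase, add_sub_cancel_left, cos_pi] at hmin
  have hz := norm_nonneg z
  rw [abs_le] at hs hmax hmin
  rcases le_total 0 (s - t) with hu | hu
  · nlinarith [mul_nonneg hu (sub_nonneg.2 hs.2)]
  · nlinarith [mul_nonneg (neg_nonneg.2 hu) (neg_le_iff_add_nonneg.1 hs.1)]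

section Polar

variable {n : ℕ} {K : Set (EuclideanSpace ℝ (Fin n))} {x y z w : EuclideanSpace ℝ (Fin n)}

lemma zero_mem_polarSet (K : Set (EuclideanSpace ℝ (Fin n))) : 0 ∈ polarSet K := fun z _ => by
  simp

lemma isClosed_polarSet (K : Set (EuclideanSpace ℝ (Fin n))) : IsClosed (polarSet K) := by
  simp only [polarSet, ofPred_forall]
  exact isClosed_biInter fun z _ => isClosed_le (by fun_prop) continuous_const

lemma neg_mem_polarSet (hsym : K = -K) (hw : w ∈ polarSet K) : -w ∈ polarSet K := fun z hz => by
  have hz' : -z ∈ K := by rw [hsym] at hz; exact hz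
  simpa [inner_neg_right, inner_neg_left] using hw (-z) hz'

lemma abs_inner_le_one_of_mem_polarSet (hsym : K = -K) (hz : z ∈ K) (hw : w ∈ polarSet K) :
    |⟪z, w⟫| ≤ 1 := by
  have := neg_mem_polarSet hsym hw z hz
  rw [inner_neg_right] at this
  exact abs_le.2 ⟨by linarith, hw z hz⟩

lemma inner_lt_one_of_mem_interior (hz : z ∈ interior K) (hw : w ∈ polarSet K) : ⟪z, w⟫ < 1 := by
  rcases eq_or_ne w 0 with rfl | hw0
  · simp
  have hnear : ∀ᶠ t in 𝓝[>] (0 : ℝ), z + t • w ∈ K :=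
    nhdsWithin_le_nhds <| (Continuous.tendsto' (by fun_prop) 0 z (by simp)).eventually
      (mem_interior_iff_mem_nhds.1 hz)
  obtain ⟨t, htK, ht⟩ := (hnear.and self_mem_nhdsWithin).exists
  have := hw _ htK
  rw [inner_add_left, real_inner_smul_left, real_inner_self_eq_norm_sq] at this
  have : 0 < t * ‖w‖ ^ 2 := by positivity
  linarith

lemma inner_sq_lt_one (hsym : K = -K) (hx : x ∈ interior K) (hw : w ∈ polarSet K) :
    ⟪x, w⟫ ^ 2 < 1 := by
  have := inner_lt_one_of_mem_interior hx (neg_mem_polarSet hsym hw)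
  rw [inner_neg_right] at this
  exact sq_lt_one_iff_abs_lt_one _ |>.2 <| abs_lt.2 ⟨by linarith, inner_lt_one_of_mem_interior hx hw⟩

lemma polarSet_subset_closedBall {r : ℝ} (hr : 0 < r) (h : closedBall 0 r ⊆ K) :
    polarSet K ⊆ closedBall 0 r⁻¹ := by
  intro w hw
  rw [mem_closedBall_zero_iff]
  rcases eq_or_ne w 0 with rfl | hw0
  · simp [hr.le]
  have hwn : 0 < ‖w‖ := norm_pos_iff.2 hw0
  have hmem : (r / ‖w‖) • w ∈ K := h <| by
    rw [mem_closedBall_zero_iff, norm_smul, norm_div, norm_norm, Real.norm_of_nonneg hr.le,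
      div_mul_cancel₀ _ hwn.ne']
  have := hw _ hmem
  rw [real_inner_smul_left, real_inner_self_eq_norm_sq, pow_two, ← mul_assoc,
    div_mul_cancel₀ _ hwn.ne'] at this
  rwa [le_inv_comm₀ hwn hr, inv_eq_one_div, le_div_iff₀ hwn]

lemma isCompact_polarSet (h0 : 0 ∈ interior K) : IsCompact (polarSet K) := by
  obtain ⟨r, hr, h⟩ := nhds_basis_closedBall.mem_iff.1 (mem_interior_iff_mem_nhds.1 h0)
  exact (isCompact_closedBall 0 r⁻¹).of_isClosed_subset (isClosed_polarSet K)
    (polarSet_subset_closedBall hr h)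

lemma closedBall_subset_polarSet {R : ℝ} (hR : 0 < R) (h : K ⊆ closedBall 0 R) :
    closedBall 0 R⁻¹ ⊆ polarSet K := fun w hw z hz =>
  calc ⟪z, w⟫ ≤ ‖z‖ * ‖w‖ := real_inner_le_norm z w
    _ ≤ R * R⁻¹ := mul_le_mul (mem_closedBall_zero_iff.1 (h hz)) (mem_closedBall_zero_iff.1 hw)
        (norm_nonneg w) hR.le
    _ = 1 := mul_inv_cancel₀ hR.ne'

lemma exists_mem_polarSet_inner_ne_zero (hK : Bornology.IsBounded K) (hy : y ≠ 0) :
    ∃ w ∈ polarSet K, ⟪y, w⟫ ≠ 0 := by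
  obtain ⟨R, hR, hKR⟩ := hK.subset_closedBall_lt 0 0
  have hyn : 0 < ‖y‖ := norm_pos_iff.2 hy
  refine ⟨(R⁻¹ / ‖y‖) • y, closedBall_subset_polarSet hR hKR ?_, ?_⟩
  · rw [mem_closedBall_zero_iff, norm_smul, norm_div, norm_norm, norm_inv,
      Real.norm_of_nonneg hR.le, div_mul_cancel₀ _ hyn.ne']
  · rw [real_inner_smul_right, real_inner_self_eq_norm_sq]
    positivity

-- One half of the bipolar theorem.
lemma mem_of_forall_inner_le_one (hKc : IsClosed K) (hconv : Convex ℝ K) (h0 : 0 ∈ K)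
    (hz : ∀ w ∈ polarSet K, ⟪z, w⟫ ≤ 1) : z ∈ K := by
  by_contra hzK
  obtain ⟨f, u, hfK, hfz⟩ := geometric_hahn_banach_closed_point hconv hKc hzK
  have hu : 0 < u := by simpa using hfK 0 h0
  set v := (InnerProductSpace.toDual ℝ (EuclideanSpace ℝ (Fin n))).symm f
  have hv : ∀ p, ⟪p, u⁻¹ • v⟫ = u⁻¹ * f p := fun p => by
    rw [real_inner_smul_right, real_inner_comm, InnerProductSpace.toDual_symm_apply]
  have := hz _ fun p hp => by
    rw [hv, inv_mul_le_iff₀ hu, mul_one]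
    exact (hfK p hp).le
  rw [hv, inv_mul_le_iff₀ hu, mul_one] at this
  linarith

lemma zero_mem_interior_of_eq_neg (hconv : Convex ℝ K) (hsym : K = -K) (hx : x ∈ interior K) :
    0 ∈ interior K := by
  have hnx : -x ∈ K := by
    rw [hsym, Set.mem_neg, neg_neg]
    exact interior_subset hx
  simpa using hconv.combo_interior_self_mem_interior hx hnx (a := 1 / 2) (b := 1 / 2)
    (by norm_num) (by norm_num) (by norm_num)

end Polar

section Ellipse

variable {n : ℕ} {K : Set (EuclideanSpace ℝ (Fin n))} {x y a w : EuclideanSpace ℝ (Fin n)} {b : ℝ}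

lemma inner_ellipse (θ : ℝ) :
    ⟪cos θ • a + (b * sin θ) • y + (x - a), w⟫ =
      ⟪a, w⟫ * cos θ + b * ⟪y, w⟫ * sin θ + (⟪x, w⟫ - ⟪a, w⟫) := by
  simp only [inner_add_left, inner_sub_left, real_inner_smul_left]
  ring

lemma InscribedEllipse.sq_add_sq_le_one (hsym : K = -K) (h : InscribedEllipse K x y a b)
    (hw : w ∈ polarSet K) : (b * ⟪y, w⟫) ^ 2 + ⟪x, w⟫ ^ 2 ≤ 1 := by
  have hxK : x ∈ K := by simpa using h 0
  refine sq_add_sq_le_one_of_forall_abs_le_one (t := ⟪a, w⟫)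
    (abs_inner_le_one_of_mem_polarSet hsym hxK hw) fun θ => ?_
  rw [← inner_ellipse]
  exact abs_inner_le_one_of_mem_polarSet hsym (h θ) hw

lemma inscribedEllipse_self (hKc : IsClosed K) (hconv : Convex ℝ K) (h0 : 0 ∈ K)
    (h : ∀ w ∈ polarSet K, (b * ⟪y, w⟫) ^ 2 + ⟪x, w⟫ ^ 2 ≤ 1) : InscribedEllipse K x y x b :=
  fun θ => mem_of_forall_inner_le_one hKc hconv h0 fun w hw => by
    rw [inner_ellipse, sub_self, add_zero]
    exact mul_cos_add_mul_sin_le_one (h w hw) θ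

lemma exists_inscribedEllipse_iff (hsym : K = -K) (hKc : IsClosed K) (hconv : Convex ℝ K)
    (h0 : 0 ∈ K) :
    (∃ a, InscribedEllipse K x y a b) ↔ ∀ w ∈ polarSet K, (b * ⟪y, w⟫) ^ 2 + ⟪x, w⟫ ^ 2 ≤ 1 :=
  ⟨fun ⟨_, h⟩ _ hw => h.sq_add_sq_le_one hsym hw,
    fun h => ⟨x, inscribedEllipse_self hKc hconv h0 h⟩⟩

end Ellipse

lemma sq_add_sq_le_one_iff {s Y b : ℝ} (hs : s ^ 2 < 1) (hb : 0 ≤ b) :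
    (b * Y) ^ 2 + s ^ 2 ≤ 1 ↔ b * (|Y| / √(1 - s ^ 2)) ≤ 1 := by
  rw [← mul_div_assoc, div_le_one (sqrt_pos.2 (by linarith)),
    le_sqrt (by positivity) (by linarith), mul_pow, mul_pow, sq_abs]
  constructor <;> intro h <;> linarith

noncomputable def ellipseRatio {n : ℕ} (x y w : EuclideanSpace ℝ (Fin n)) : ℝ :=
  |⟪y, w⟫| / √(1 - ⟪x, w⟫ ^ 2)

section Ratio

variable {n : ℕ} {K : Set (EuclideanSpace ℝ (Fin n))} {x y w₀ : EuclideanSpace ℝ (Fin n)}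

lemma continuousOn_ellipseRatio {S : Set (EuclideanSpace ℝ (Fin n))}
    (hS : ∀ w ∈ S, ⟪x, w⟫ ^ 2 < 1) : ContinuousOn (ellipseRatio x y) S :=
  ContinuousOn.div (by fun_prop) (by fun_prop) fun w hw => (sqrt_pos.2 (by linarith [hS w hw])).ne'

lemma ellipseRatio_pos (hx : ⟪x, w₀⟫ ^ 2 < 1) (hy : ⟪y, w₀⟫ ≠ 0) : 0 < ellipseRatio x y w₀ :=
  div_pos (abs_pos.2 hy) (sqrt_pos.2 (by linarith))

lemma bStar_eq_inv_ellipseRatio (hsym : K = -K) (hKc : IsClosed K) (hconv : Convex ℝ K)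
    (hx : x ∈ interior K) (hw₀ : w₀ ∈ polarSet K)
    (hmax : IsMaxOn (ellipseRatio x y) (polarSet K) w₀) (hpos : 0 < ellipseRatio x y w₀) :
    bStar K x y = (ellipseRatio x y w₀)⁻¹ := by
  have h0 := interior_subset (zero_mem_interior_of_eq_neg hconv hsym hx)
  have hBset : {b | 0 < b ∧ ∃ a, InscribedEllipse K x y a b} = Ioc 0 (ellipseRatio x y w₀)⁻¹ := by
    ext b
    simp only [mem_ofPred_eq, mem_Ioc, exists_inscribedEllipse_iff hsym hKc hconv h0]
    refine and_congr_right fun hb => ?_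
    rw [← one_div, le_div_iff₀ hpos]
    refine ⟨fun h => (sq_add_sq_le_one_iff (inner_sq_lt_one hsym hx hw₀) hb.le).1 (h w₀ hw₀),
      fun h w hw => (sq_add_sq_le_one_iff (inner_sq_lt_one hsym hx hw) hb.le).2 ?_⟩
    exact (mul_le_mul_of_nonneg_left (hmax hw) hb.le).trans h
  rw [bStar, hBset, csSup_Ioc (inv_pos.2 hpos)]

end Ratio

theorem stmt_15_general {n : ℕ} (K : Set (EuclideanSpace ℝ (Fin n)))
    (hK : IsConvexBody K) (hsym : K = -K) (x y : EuclideanSpace ℝ (Fin n))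
    (hx : x ∈ interior K) (hy : y ≠ 0) :
    ∃ w ∈ polarSet K, (inner ℝ x w : ℝ) ^ 2 < 1 ∧
      |(inner ℝ y w : ℝ)| / Real.sqrt (1 - (inner ℝ x w : ℝ) ^ 2) = 1 / bStar K x y := by
  obtain ⟨hKc, hconv, -⟩ := hK
  have hx_sq : ∀ w ∈ polarSet K, ⟪x, w⟫ ^ 2 < 1 := fun w => inner_sq_lt_one hsym hx
  obtain ⟨w₀, hw₀, hmax⟩ :=
    (isCompact_polarSet (zero_mem_interior_of_eq_neg hconv hsym hx)).exists_isMaxOn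
      ⟨0, zero_mem_polarSet K⟩ (continuousOn_ellipseRatio (y := y) hx_sq)
  obtain ⟨w₁, hw₁, hyw₁⟩ := exists_mem_polarSet_inner_ne_zero hKc.isBounded hy
  have hpos := (ellipseRatio_pos (hx_sq w₁ hw₁) hyw₁).trans_le (hmax hw₁)
  refine ⟨w₀, hw₀, hx_sq w₀ hw₀, ?_⟩
  rw [bStar_eq_inv_ellipseRatio hsym hKc.isClosed hconv hx hw₀ hmax hpos, one_div, inv_inv]
  rfl

/-- For a symmetric convex body, the supremum of |⟨y,w⟩|/√(1 − ⟨x,w⟩²) over w ∈ K* is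
attained and equals 1/b*_K(x,y). -/
theorem stmt_15 {n : ℕ} (hn : 1 ≤ n) (K : Set (EuclideanSpace ℝ (Fin n)))
    (hK : IsConvexBody K) (hsym : K = -K) (x y : EuclideanSpace ℝ (Fin n))
    (hx : x ∈ interior K) (hy : y ≠ 0) :
    ∃ w ∈ polarSet K, (inner ℝ x w : ℝ) ^ 2 < 1 ∧
      |(inner ℝ y w : ℝ)| / Real.sqrt (1 - (inner ℝ x w : ℝ) ^ 2) = 1 / bStar K x y :=
  stmt_15_general K hK hsym x y hx hy
end
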